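/- Let P₁, P₂ be two von Mises–Fisher distributions on the unit sphere S^{n−1} ⊂ R^n with parameters θ₁ = (μ₁, κ₁) and θ₂ = (μ₂, κ₂), where μᵢ ∈ S^{n−1} and κᵢ > 0, i.e., with densities proportional to exp(κᵢ μᵢᵀ u). Then the KL divergence satisfies D_KL(P₁, P₂) ≤ 2‖κ₁μ₁ − κ₂μ₂‖₂. -/

import Mathlib

open MeasureTheory Metric

noncomputable section

/-- The surface measure on the unit sphere `S^{n-1} ⊂ ℝⁿ`. -/
def sphereMeasure (n : ℕ) : Measure (sphere (0 : EuclideanSpace ℝ (Fin n)) 1) :=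
  (volume : Measure (EuclideanSpace ℝ (Fin n))).toSphere

/-- The von Mises–Fisher density on the unit sphere with parameter `(μ, κ)`,
proportional to `exp(κ ⟪μ, u⟫)` and normalized with respect to the surface measure. -/
def vMFDensity (n : ℕ) (μ : EuclideanSpace ℝ (Fin n)) (κ : ℝ)
    (u : sphere (0 : EuclideanSpace ℝ (Fin n)) 1) : ℝ :=
  Real.exp (κ * inner ℝ μ (u : EuclideanSpace ℝ (Fin n))) /
    ∫ v, Real.exp (κ * inner ℝ μ (v : EuclideanSpace ℝ (Fin n))) ∂(sphereMeasure n)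

/-!
Both densities have the Gibbs form `exp g / Z`, so `log (f₁ / f₂) = (g₁ - g₂) + (log Z₂ - log Z₁)`.
On the sphere `g₁ - g₂ = ⟪κ₁μ₁ - κ₂μ₂, u⟫` is bounded by `C = ‖κ₁μ₁ - κ₂μ₂‖`, and the same bound
`exp g₂ ≤ exp C * exp g₁` integrates to `log Z₂ - log Z₁ ≤ C`. Hence `log (f₁ / f₂) ≤ 2C`, and
integrating against the probability density `f₁` gives the claim.
-/

open Real

section Gibbs

variable {X : Type*} [MeasurableSpace X] {ν : Measure X} {g g₁ g₂ : X → ℝ} {C : ℝ}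

def gibbsDensity (ν : Measure X) (g : X → ℝ) (x : X) : ℝ :=
  exp (g x) / ∫ y, exp (g y) ∂ν

lemma gibbsDensity_nonneg (x : X) : 0 ≤ gibbsDensity ν g x := by
  unfold gibbsDensity
  positivity

lemma integrable_gibbsDensity (hg : Integrable (fun x ↦ exp (g x)) ν) :
    Integrable (gibbsDensity ν g) ν :=
  hg.div_const _

lemma integral_gibbsDensity [NeZero ν] (hg : Integrable (fun x ↦ exp (g x)) ν) :
    ∫ x, gibbsDensity ν g x ∂ν = 1 := by
  simp only [gibbsDensity]
  rw [integral_div, div_self (integral_exp_pos hg).ne']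

lemma log_gibbsDensity_div [NeZero ν] (hg₁ : Integrable (fun x ↦ exp (g₁ x)) ν)
    (hg₂ : Integrable (fun x ↦ exp (g₂ x)) ν) (x : X) :
    log (gibbsDensity ν g₁ x / gibbsDensity ν g₂ x) =
      g₁ x - g₂ x + (log (∫ y, exp (g₂ y) ∂ν) - log (∫ y, exp (g₁ y) ∂ν)) := by
  have hZ₁ := (integral_exp_pos hg₁).ne'
  have hZ₂ := (integral_exp_pos hg₂).ne'
  rw [gibbsDensity, gibbsDensity, log_div (by positivity) (by positivity),
    log_div (exp_pos _).ne' hZ₁, log_div (exp_pos _).ne' hZ₂, log_exp, log_exp]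
  ring

lemma log_integral_exp_le_of_le [NeZero ν] (hg₁ : Integrable (fun x ↦ exp (g₁ x)) ν)
    (hg₂ : Integrable (fun x ↦ exp (g₂ x)) ν) (h : ∀ x, g₂ x ≤ g₁ x + C) :
    log (∫ x, exp (g₂ x) ∂ν) ≤ log (∫ x, exp (g₁ x) ∂ν) + C := by
  have hle : ∫ x, exp (g₂ x) ∂ν ≤ exp C * ∫ x, exp (g₁ x) ∂ν := by
    rw [← integral_const_mul]
    refine integral_mono hg₂ (hg₁.const_mul _) fun x ↦ ?_
    rw [← exp_add]
    exact exp_le_exp.2 (by linarith [h x])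
  calc log (∫ x, exp (g₂ x) ∂ν)
      ≤ log (exp C * ∫ x, exp (g₁ x) ∂ν) := log_le_log (integral_exp_pos hg₂) hle
    _ = log (∫ x, exp (g₁ x) ∂ν) + C := by
      rw [log_mul (exp_pos _).ne' (integral_exp_pos hg₁).ne', log_exp, add_comm]

theorem integral_gibbsDensity_mul_log_div_le (hg₁ : Integrable (fun x ↦ exp (g₁ x)) ν)
    (hg₂ : Integrable (fun x ↦ exp (g₂ x)) ν)
    (hm : AEStronglyMeasurable (fun x ↦ g₁ x - g₂ x) ν) (hC : 0 ≤ C)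
    (h : ∀ x, |g₁ x - g₂ x| ≤ C) :
    ∫ x, gibbsDensity ν g₁ x * log (gibbsDensity ν g₁ x / gibbsDensity ν g₂ x) ∂ν ≤ 2 * C := by
  rcases eq_zero_or_neZero ν with rfl | hν
  · simpa using hC
  set c := log (∫ y, exp (g₂ y) ∂ν) - log (∫ y, exp (g₁ y) ∂ν)
  have hc : c ≤ C := by
    have := log_integral_exp_le_of_le hg₁ hg₂ fun x ↦ by linarith [(abs_le.1 (h x)).1]
    linarith
  have hbound : ∀ x, g₁ x - g₂ x + c ≤ 2 * C := fun x ↦ by linarith [(abs_le.1 (h x)).2]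
  have hint : Integrable (fun x ↦ gibbsDensity ν g₁ x * (g₁ x - g₂ x + c)) ν :=
    (integrable_gibbsDensity hg₁).mul_bdd (hm.add aestronglyMeasurable_const)
      (ae_of_all _ fun x ↦ (abs_add_le _ _).trans (add_le_add_left (h x) _))
  simp_rw [log_gibbsDensity_div hg₁ hg₂]
  calc ∫ x, gibbsDensity ν g₁ x * (g₁ x - g₂ x + c) ∂ν
      ≤ ∫ x, gibbsDensity ν g₁ x * (2 * C) ∂ν :=
        integral_mono hint ((integrable_gibbsDensity hg₁).mul_const _)
          fun x ↦ mul_le_mul_of_nonneg_left (hbound x) (gibbsDensity_nonneg x)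
    _ = 2 * C := by rw [integral_mul_const, integral_gibbsDensity hg₁, one_mul]

end Gibbs

lemma abs_sub_inner_le_norm_sub {E : Type*} [NormedAddCommGroup E] [InnerProductSpace ℝ E]
    (μ₁ μ₂ : E) (κ₁ κ₂ : ℝ) {u : E} (hu : u ∈ sphere (0 : E) 1) :
    |κ₁ * inner ℝ μ₁ u - κ₂ * inner ℝ μ₂ u| ≤ ‖κ₁ • μ₁ - κ₂ • μ₂‖ := by
  rw [← real_inner_smul_left, ← real_inner_smul_left, ← inner_sub_left]
  simpa [mem_sphere_zero_iff_norm.1 hu] using abs_real_inner_le_norm (κ₁ • μ₁ - κ₂ • μ₂) u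

instance (n : ℕ) : IsFiniteMeasure (sphereMeasure n) := by
  unfold sphereMeasure
  infer_instance

lemma vMFDensity_eq_gibbsDensity (n : ℕ) (μ : EuclideanSpace ℝ (Fin n)) (κ : ℝ) :
    vMFDensity n μ κ =
      gibbsDensity (sphereMeasure n) fun u ↦ κ * inner ℝ μ (u : EuclideanSpace ℝ (Fin n)) :=
  rfl

lemma continuous_mul_inner_coe (n : ℕ) (μ : EuclideanSpace ℝ (Fin n)) (κ : ℝ) :
    Continuous fun u : sphere (0 : EuclideanSpace ℝ (Fin n)) 1 ↦
      κ * inner ℝ μ (u : EuclideanSpace ℝ (Fin n)) := by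
  fun_prop

lemma integrable_sphereMeasure_of_continuous {n : ℕ}
    {f : sphere (0 : EuclideanSpace ℝ (Fin n)) 1 → ℝ} (hf : Continuous f) :
    Integrable f (sphereMeasure n) :=
  hf.integrable_of_hasCompactSupport (HasCompactSupport.of_compactSpace f)

theorem kl_vMF_le_general (n : ℕ) (μ₁ μ₂ : EuclideanSpace ℝ (Fin n)) (κ₁ κ₂ : ℝ) :
    ∫ u, vMFDensity n μ₁ κ₁ u *
        Real.log (vMFDensity n μ₁ κ₁ u / vMFDensity n μ₂ κ₂ u) ∂(sphereMeasure n) ≤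
      2 * ‖κ₁ • μ₁ - κ₂ • μ₂‖ := by
  have hg₁ := continuous_mul_inner_coe n μ₁ κ₁
  have hg₂ := continuous_mul_inner_coe n μ₂ κ₂
  rw [vMFDensity_eq_gibbsDensity, vMFDensity_eq_gibbsDensity]
  exact integral_gibbsDensity_mul_log_div_le
    (integrable_sphereMeasure_of_continuous (continuous_exp.comp hg₁))
    (integrable_sphereMeasure_of_continuous (continuous_exp.comp hg₂))
    (hg₁.sub hg₂).aestronglyMeasurable (norm_nonneg _)
    fun u ↦ abs_sub_inner_le_norm_sub μ₁ μ₂ κ₁ κ₂ u.2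

/-- The KL divergence between two von Mises–Fisher distributions with parameters
`(μ₁, κ₁)` and `(μ₂, κ₂)` is at most `2‖κ₁μ₁ − κ₂μ₂‖₂`. -/
theorem kl_vMF_le (n : ℕ) (μ₁ μ₂ : EuclideanSpace ℝ (Fin n)) (κ₁ κ₂ : ℝ)
    (hμ₁ : ‖μ₁‖ = 1) (hμ₂ : ‖μ₂‖ = 1) (hκ₁ : 0 < κ₁) (hκ₂ : 0 < κ₂) :
    ∫ u, vMFDensity n μ₁ κ₁ u *
        Real.log (vMFDensity n μ₁ κ₁ u / vMFDensity n μ₂ κ₂ u) ∂(sphereMeasure n) ≤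
      2 * ‖κ₁ • μ₁ - κ₂ • μ₂‖ :=
  kl_vMF_le_general n μ₁ μ₂ κ₁ κ₂

end
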